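/- Two-time-point parallel trends identification of the counterfactual trend: under the time-varying MTP parallel trends assumptions and consistency, E[Y_2(g)-Y_1(g)|A_0=a_0,L_0=l_0] = E[ mu_{12}^d(l_0, L_1, g(l_0,a_0), g(l_0,L_1,g(l_0,a_0),A_1)) | A_0=g(l_0,a_0), L_0=l_0 ], where mu_{12}^d(l_0,l_1,a_0,a_1) = E[Y_2-Y_1|L_0=l_0,L_1=l_1,A_0=a_0,A_1=a_1]. -/
import Mathlib


open scoped Classical

noncomputable def pr {Ω : Type*} [Fintype Ω] (p : Ω → ℝ) (S : Set Ω) : ℝ :=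
  ∑ ω, if ω ∈ S then p ω else 0

noncomputable def cexp {Ω : Type*} [Fintype Ω] (p : Ω → ℝ) (X : Ω → ℝ) (S : Set Ω) : ℝ :=
  (∑ ω, if ω ∈ S then p ω * X ω else 0) / pr p S

lemma sum_ite_iff' {Ω : Type*} [Fintype Ω] {P Q : Ω → Prop} {dP : DecidablePred P}
    {dQ : DecidablePred Q} (h : ∀ ω, P ω ↔ Q ω) (f : Ω → ℝ) :
    (∑ ω, @ite _ (P ω) (dP ω) (f ω) 0) = ∑ ω, @ite _ (Q ω) (dQ ω) (f ω) 0 := by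
  apply Finset.sum_congr rfl
  intro ω _
  by_cases hω : P ω
  · rw [if_pos hω, if_pos ((h ω).mp hω)]
  · rw [if_neg hω, if_neg (fun hq => hω ((h ω).mpr hq))]

lemma pr_pos' {Ω : Type*} [Fintype Ω] {p : Ω → ℝ} (hp : ∀ ω, 0 < p ω) {S : Set Ω}
    (h : ∃ ω, ω ∈ S) : 0 < pr p S := by
  obtain ⟨ω0, h0⟩ := h
  rw [pr]
  apply Finset.sum_pos'
  · intro i _
    by_cases hi : i ∈ S
    · rw [if_pos hi]; exact (hp i).le
    · rw [if_neg hi]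
  · exact ⟨ω0, Finset.mem_univ _, by rw [if_pos h0]; exact hp ω0⟩

lemma sum_eq_cexp_mul' {Ω : Type*} [Fintype Ω] (p : Ω → ℝ) (X : Ω → ℝ) (S : Set Ω)
    {dS : DecidablePred (· ∈ S)} (h : pr p S ≠ 0) :
    (∑ ω, @ite _ (ω ∈ S) (dS ω) (p ω * X ω) 0) = cexp p X S * pr p S := by
  rw [cexp, div_mul_cancel₀ _ h]
  apply Finset.sum_congr rfl
  intro ω _
  by_cases hω : ω ∈ S
  · rw [if_pos hω, if_pos hω]
  · rw [if_neg hω, if_neg hω]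

lemma sum_const_mul' {Ω : Type*} [Fintype Ω] (p : Ω → ℝ) (X : Ω → ℝ) (S : Set Ω)
    {dS : DecidablePred (· ∈ S)} (c : ℝ) (hc : ∀ ω ∈ S, X ω = c) :
    (∑ ω, @ite _ (ω ∈ S) (dS ω) (p ω * X ω) 0) = c * pr p S := by
  rw [pr, Finset.mul_sum]
  apply Finset.sum_congr rfl
  intro ω _
  by_cases h : ω ∈ S
  · rw [if_pos h, if_pos h, hc ω h]; ring
  · rw [if_neg h, if_neg h]; ring

lemma cexp_const' {Ω : Type*} [Fintype Ω] {p : Ω → ℝ} (hp : ∀ ω, 0 < p ω) (X : Ω → ℝ)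
    (S : Set Ω) (hne : ∃ ω, ω ∈ S) {c : ℝ} (hc : ∀ ω ∈ S, X ω = c) : cexp p X S = c := by
  have hpr := ne_of_gt (pr_pos' hp hne)
  rw [cexp, sum_const_mul' p X S c hc, mul_div_assoc, div_self hpr, mul_one]

lemma tower' {Ω β : Type*} [Fintype Ω] [DecidableEq β] (p : Ω → ℝ) (hp : ∀ ω, 0 < p ω)
    (S : Set Ω)
    {dS : DecidablePred (· ∈ S)} (κ : Ω → β) (F G : Ω → ℝ)
    (h : ∀ y, (∃ ω0, ω0 ∈ S ∧ κ ω0 = y) →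
      cexp p F {ω | ω ∈ S ∧ κ ω = y} = cexp p G {ω | ω ∈ S ∧ κ ω = y}) :
    (∑ ω, @ite _ (ω ∈ S) (dS ω) (p ω * F ω) 0)
      = ∑ ω, @ite _ (ω ∈ S) (dS ω) (p ω * G ω) 0 := by
  classical
  have hmaps : ∀ x ∈ Finset.univ.filter (· ∈ S),
      κ x ∈ (Finset.univ.filter (· ∈ S)).image κ :=
    fun x hx => Finset.mem_image_of_mem κ hx
  have key : ∀ X : Ω → ℝ,
      (∑ ω, @ite _ (ω ∈ S) (dS ω) (p ω * X ω) 0)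
        = ∑ y ∈ (Finset.univ.filter (· ∈ S)).image κ,
            ∑ ω, if ω ∈ S ∧ κ ω = y then p ω * X ω else 0 := by
    intro X
    calc (∑ ω, @ite _ (ω ∈ S) (dS ω) (p ω * X ω) 0)
        = ∑ ω ∈ Finset.univ.filter (· ∈ S), p ω * X ω := by
          rw [Finset.sum_filter]
      _ = ∑ y ∈ (Finset.univ.filter (· ∈ S)).image κ,
            ∑ ω ∈ (Finset.univ.filter (· ∈ S)).filter (fun ω => κ ω = y),
              p ω * X ω :=
          (Finset.sum_fiberwise_of_maps_to hmaps _).symm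
      _ = ∑ y ∈ (Finset.univ.filter (· ∈ S)).image κ,
            ∑ ω, if ω ∈ S ∧ κ ω = y then p ω * X ω else 0 := by
          apply Finset.sum_congr rfl
          intro y _
          rw [Finset.sum_filter, Finset.sum_filter]
          apply Finset.sum_congr rfl
          intro ω _
          by_cases h1 : ω ∈ S
          · by_cases h2 : κ ω = y
            · rw [if_pos h1, if_pos h2, if_pos ⟨h1, h2⟩]
            · rw [if_pos h1, if_neg h2, if_neg (fun H => h2 H.2)]
          · rw [if_neg h1, if_neg (fun H => h1 H.1)]
  rw [key F, key G]
  apply Finset.sum_congr rfl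
  intro y hy
  obtain ⟨ω0, hω0, hκ0⟩ := Finset.mem_image.mp hy
  have hne : ∃ ω, ω ∈ {ω | ω ∈ S ∧ κ ω = y} :=
    ⟨ω0, (Finset.mem_filter.mp hω0).2, hκ0⟩
  have hpr : pr p {ω | ω ∈ S ∧ κ ω = y} ≠ 0 := ne_of_gt (pr_pos' hp hne)
  have bridge : ∀ X : Ω → ℝ,
      (∑ ω, if ω ∈ S ∧ κ ω = y then p ω * X ω else 0)
        = ∑ ω, if ω ∈ {ω | ω ∈ S ∧ κ ω = y} then p ω * X ω else 0 := by
    intro X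
    apply Finset.sum_congr rfl
    intro ω _
    split_ifs <;> simp_all [Set.mem_setOf_eq]
  rw [bridge F, bridge G, sum_eq_cexp_mul' p F _ hpr, sum_eq_cexp_mul' p G _ hpr,
    h y ⟨ω0, (Finset.mem_filter.mp hω0).2, hκ0⟩]

/-- Two-time-point parallel-trends identification of the counterfactual trend:
`Y2g = Y₂(g)` and `Y1pot a = Y₁(a)` (with `Y₁(g) = Y₁(g₀(l₀,a₀))` conditionally).
Under the time-varying MTP parallel trends assumptions (i) at time 0 and (iii)
at time 1, and consistency at both times,
`E[Y₂(g)-Y₁(g)|A₀=a₀,L₀=l₀]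
  = E[μ₁₂^d(l₀,L₁,g₀(l₀,a₀),g₁(l₀,L₁,g₀(l₀,a₀),A₁)) | A₀=g₀(l₀,a₀),L₀=l₀]`,
where `μ₁₂^d(l₀,l₁,a₀,a₁) = E[Y₂-Y₁|L₀=l₀,L₁=l₁,A₀=a₀,A₁=a₁]`. -/
theorem stmt12
    {Ω 𝒜 𝓛0 𝓛1 : Type*} [Fintype Ω]
    (p : Ω → ℝ) (hp : ∀ ω, 0 < p ω) (hp1 : ∑ ω, p ω = 1)
    (L0 : Ω → 𝓛0) (A0 : Ω → 𝒜) (L1 : Ω → 𝓛1) (A1 : Ω → 𝒜)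
    (Y0 Y1 Y2 : Ω → ℝ)
    (g0 : 𝓛0 → 𝒜 → 𝒜) (g1 : 𝓛0 → 𝓛1 → 𝒜 → 𝒜 → 𝒜)
    (Y2g : Ω → ℝ) (Y1pot : 𝒜 → Ω → ℝ)
    (hconsY1 : ∀ a ω, A0 ω = a → Y1pot a ω = Y1 ω)
    (hPT0 : ∀ l0 a0,
      cexp p (fun ω => Y2g ω - Y1pot (g0 l0 a0) ω) {ω | A0 ω = a0 ∧ L0 ω = l0}
        = cexp p (fun ω => Y2g ω - Y1pot (g0 l0 a0) ω)
            {ω | A0 ω = g0 l0 a0 ∧ L0 ω = l0})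
    (hPT1 : ∀ l0 a0 l1 a1,
      cexp p (fun ω => Y2g ω - Y1 ω)
          {ω | L0 ω = l0 ∧ A0 ω = a0 ∧ L1 ω = l1 ∧ A1 ω = a1}
        = cexp p (fun ω => Y2g ω - Y1 ω)
            {ω | L0 ω = l0 ∧ A0 ω = a0 ∧ L1 ω = l1 ∧ A1 ω = g1 l0 l1 a0 a1})
    (hconsY2 : ∀ l0 a0 l1 a1,
      cexp p (fun ω => Y2g ω - Y1 ω)
          {ω | L0 ω = l0 ∧ A0 ω = g0 l0 a0 ∧ L1 ω = l1 ∧ A1 ω = g1 l0 l1 (g0 l0 a0) a1}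
        = cexp p (fun ω => Y2 ω - Y1 ω)
            {ω | L0 ω = l0 ∧ A0 ω = g0 l0 a0 ∧ L1 ω = l1 ∧ A1 ω = g1 l0 l1 (g0 l0 a0) a1})
    (μ12d : 𝓛0 → 𝓛1 → 𝒜 → 𝒜 → ℝ)
    (hμ12d : ∀ l0 l1 a0 a1, μ12d l0 l1 a0 a1 =
      cexp p (fun ω => Y2 ω - Y1 ω)
        {ω | L0 ω = l0 ∧ L1 ω = l1 ∧ A0 ω = a0 ∧ A1 ω = a1}) :
    ∀ l0 a0,
      cexp p (fun ω => Y2g ω - Y1pot (g0 l0 a0) ω) {ω | A0 ω = a0 ∧ L0 ω = l0}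
        = cexp p (fun ω => μ12d l0 (L1 ω) (g0 l0 a0) (g1 l0 (L1 ω) (g0 l0 a0) (A1 ω)))
            {ω | A0 ω = g0 l0 a0 ∧ L0 ω = l0} := by
  intro l0 a0
  rw [hPT0 l0 a0]
  set a0' := g0 l0 a0 with ha0'
  set S : Set Ω := {ω | A0 ω = a0' ∧ L0 ω = l0} with hS
  have hF : cexp p (fun ω => Y2g ω - Y1pot a0' ω) S = cexp p (fun ω => Y2g ω - Y1 ω) S := by
    unfold cexp
    congr 1
    apply Finset.sum_congr rfl
    intro ω _
    by_cases h : ω ∈ S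
    · rw [if_pos h, if_pos h]
      simp only [hconsY1 a0' ω h.1]
    · rw [if_neg h, if_neg h]
  rw [hF]
  unfold cexp
  congr 1
  apply tower' p hp S (fun ω => (L1 ω, A1 ω))
  rintro ⟨l1, a1⟩ ⟨ω0, hω0, hκ0⟩
  set C : Set Ω := {ω | L0 ω = l0 ∧ A0 ω = a0' ∧ L1 ω = l1 ∧ A1 ω = a1} with hC
  have hiff : ∀ ω : Ω, (ω ∈ S ∧ (L1 ω, A1 ω) = (l1, a1)) ↔ ω ∈ C := by
    intro ω
    simp only [hS, Set.mem_setOf_eq, Prod.mk.injEq, hC]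
    tauto
  have hCeq : {ω | ω ∈ S ∧ (L1 ω, A1 ω) = (l1, a1)} = C := Set.ext hiff
  have hne : ∃ ω, ω ∈ C := ⟨ω0, (hiff ω0).mp ⟨hω0, hκ0⟩⟩
  have hval : cexp p (fun ω => Y2g ω - Y1 ω) C
      = μ12d l0 l1 a0' (g1 l0 l1 a0' a1) := by
    rw [hC, hPT1 l0 a0' l1 a1, hμ12d]
    have hset : cexp p (fun ω => Y2 ω - Y1 ω)
        {ω | L0 ω = l0 ∧ A0 ω = a0' ∧ L1 ω = l1 ∧ A1 ω = g1 l0 l1 a0' a1}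
        = cexp p (fun ω => Y2 ω - Y1 ω)
        {ω | L0 ω = l0 ∧ L1 ω = l1 ∧ A0 ω = a0' ∧ A1 ω = g1 l0 l1 a0' a1} := by
      congr 1
      ext ω
      simp only [Set.mem_setOf_eq]
      tauto
    rw [← hset, ← hconsY2 l0 a0 l1 a1]
  rw [hCeq, hval]
  symm
  apply cexp_const' hp _ C hne
  intro ω hω
  show μ12d l0 (L1 ω) a0' (g1 l0 (L1 ω) a0' (A1 ω)) = _
  rw [hω.2.2.1, hω.2.2.2]
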